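/- For all n ≥ 1, 1 + Σ_{h=1}^{n−1} (n−h)·C_h equals the number of Schröder paths of semilength n−1 avoiding the pattern U H D, where such paths are exactly those of the form H^a Q H^b with Q a Dyck path. -/

import Mathlib

/-- `q` (with `true` an up step and `false` a down step) is a Dyck word. -/
def IsDyckWord (l : List Bool) : Prop :=
  (∀ m, (l.take m).count false ≤ (l.take m).count true) ∧
    l.count false = l.count true

/-- A Schröder path avoiding UHD, encoded as a list over `Option Bool`
(`none` = a double horizontal step, `some true` = up, `some false` = down):
it has the form H^a Q H^b with Q a Dyck path. -/
def IsUHDAvoidingSchroder (l : List (Option Bool)) (semilength : ℕ) : Prop :=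
  ∃ a b q, IsDyckWord q ∧
    l = List.replicate a none ++ q.map some ++ List.replicate b none ∧
    2 * a + 2 * b + q.length = 2 * semilength

/-!
A UHD-avoiding path of semilength `m` is either `H^m` or `H^a Q H^b` with `Q` a nonempty Dyck
path of some semilength `h ∈ [1, m]`; then `a ∈ [0, m - h]` is free and `b = m - h - a`, giving
`(m + 1 - h) C_h` paths for each `h`. The triple `(a, Q, b)` is recovered from the path: `a` is the
length of its leading run of `H`s, `a + b` its number of `H`s, and `Q` what lies between.
-/

open DyckStep

def DyckStep.equivBool : DyckStep ≃ Bool where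
  toFun | U => true | D => false
  invFun | true => U | false => D
  left_inv s := by cases s <;> rfl
  right_inv b := by cases b <;> rfl

lemma isDyckWord_map_equivBool_iff (s : List DyckStep) :
    IsDyckWord (s.map equivBool) ↔
      (∀ i, (s.take i).count D ≤ (s.take i).count U) ∧ s.count U = s.count D := by
  have count_map (t : List DyckStep) (x : DyckStep) :
      (t.map equivBool).count (equivBool x) = t.count x :=
    List.count_map_of_injective _ _ equivBool.injective x
  have hU : equivBool U = true := rfl
  have hD : equivBool D = false := rfl
  simp only [IsDyckWord, ← List.map_take, ← hU, ← hD, count_map, eq_comm]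

def dyckWordEquiv : DyckWord ≃ {q : List Bool // IsDyckWord q} where
  toFun p := ⟨p.toList.map equivBool,
    (isDyckWord_map_equivBool_iff _).2 ⟨p.count_D_le_count_U, p.count_U_eq_count_D⟩⟩
  invFun q :=
    have h := (isDyckWord_map_equivBool_iff (q.1.map equivBool.symm)).1 (by
      simpa [List.map_map] using q.2)
    ⟨q.1.map equivBool.symm, h.2, h.1⟩
  left_inv p := by ext1; simp [List.map_map]
  right_inv q := by ext1; simp [List.map_map]

lemma length_dyckWordEquiv (p : DyckWord) : (dyckWordEquiv p).1.length = 2 * p.semilength := by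
  simp [dyckWordEquiv, p.two_mul_semilength_eq_length]

lemma dyckWordEquiv_ne_nil {p : DyckWord} (hp : 1 ≤ p.semilength) : (dyckWordEquiv p).1 ≠ [] :=
  List.ne_nil_of_length_pos (by rw [length_dyckWordEquiv]; omega)

def paddedPath (a : ℕ) (q : List Bool) (b : ℕ) : List (Option Bool) :=
  List.replicate a none ++ q.map some ++ List.replicate b none

lemma count_none_paddedPath (a : ℕ) (q : List Bool) (b : ℕ) :
    (paddedPath a q b).count none = a + b := by
  simp [paddedPath, List.count_eq_zero]

lemma length_takeWhile_isNone_paddedPath (a : ℕ) {q : List Bool} (b : ℕ) (hq : q ≠ []) :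
    ((paddedPath a q b).takeWhile Option.isNone).length = a := by
  obtain ⟨x, t, rfl⟩ := List.exists_cons_of_ne_nil hq
  rw [paddedPath, List.append_assoc, List.takeWhile_append_of_pos (by simp)]
  simp [List.takeWhile_cons_of_neg]

lemma paddedPath_inj {a a' b b' : ℕ} {q q' : List Bool} (hq : q ≠ []) (hq' : q' ≠ [])
    (h : paddedPath a q b = paddedPath a' q' b') : a = a' ∧ q = q' ∧ b = b' := by
  have ha : a = a' := by
    rw [← length_takeWhile_isNone_paddedPath a b hq, h,
      length_takeWhile_isNone_paddedPath a' b' hq']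
  have hb : b = b' := by
    have := count_none_paddedPath a q b
    rw [h, count_none_paddedPath] at this
    omega
  subst ha hb
  refine ⟨rfl, ?_, rfl⟩
  unfold paddedPath at h
  exact List.map_injective_iff.2 (Option.some_injective _)
    (List.append_cancel_left (List.append_cancel_right h))

abbrev SchroderShape (m : ℕ) :=
  Option (Σ h : Finset.Icc 1 m, Fin (m + 1 - h) × {p : DyckWord // p.semilength = h})

namespace SchroderShape

variable {m : ℕ}

def toPath : SchroderShape m → List (Option Bool)
  | none => List.replicate m none
  | some ⟨h, a, p⟩ => paddedPath a (dyckWordEquiv p.1) (m - h - a)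

lemma isUHDAvoidingSchroder_toPath (x : SchroderShape m) :
    IsUHDAvoidingSchroder x.toPath m := by
  rcases x with _ | ⟨h, a, p, hp⟩
  · exact ⟨m, 0, [], ⟨by simp, rfl⟩, by simp [toPath], by simp⟩
  · refine ⟨a, m - h - a, _, (dyckWordEquiv p).2, rfl, ?_⟩
    have ha := a.2
    have hh := Finset.mem_Icc.1 h.2
    rw [length_dyckWordEquiv, hp]
    omega

lemma eq_none_of_count_none_toPath {x : SchroderShape m} (hx : x.toPath.count none = m) :
    x = none := by
  obtain _ | ⟨h, a, p⟩ := x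
  · rfl
  · have ha := a.2
    have hh := Finset.mem_Icc.1 h.2
    rw [toPath, count_none_paddedPath] at hx
    omega

lemma toPath_injective : Function.Injective (toPath (m := m)) := by
  have count_none : (toPath (none : SchroderShape m)).count none = m := List.count_replicate_self
  rintro (_ | y) (_ | y') heq
  · rfl
  · exact (eq_none_of_count_none_toPath (heq ▸ count_none)).symm
  · exact eq_none_of_count_none_toPath (heq ▸ count_none)
  · obtain ⟨h, a, p, hp⟩ := y
    obtain ⟨h', a', p', hp'⟩ := y'
    have hh := Finset.mem_Icc.1 h.2
    have hh' := Finset.mem_Icc.1 h'.2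
    obtain ⟨ha, hq, -⟩ := paddedPath_inj
      (dyckWordEquiv_ne_nil (show 1 ≤ p.semilength by omega))
      (dyckWordEquiv_ne_nil (show 1 ≤ p'.semilength by omega)) heq
    obtain rfl : p = p' := dyckWordEquiv.injective (Subtype.ext hq)
    obtain rfl : h = h' := Subtype.ext (hp.symm.trans hp')
    obtain rfl : a = a' := Fin.ext ha
    rfl

lemma exists_toPath_eq {l : List (Option Bool)} (hl : IsUHDAvoidingSchroder l m) :
    ∃ x : SchroderShape m, x.toPath = l := by
  obtain ⟨a, b, q, hq, rfl, hlen⟩ := hl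
  rcases eq_or_ne q [] with rfl | hq0
  · refine ⟨none, ?_⟩
    simp only [List.length_nil, add_zero] at hlen
    rw [toPath, List.map_nil, List.append_nil, ← List.replicate_add]
    congr 1
    omega
  · obtain ⟨p, rfl⟩ : ∃ p, (dyckWordEquiv p).1 = q :=
      ⟨dyckWordEquiv.symm ⟨q, hq⟩, by simp⟩
    have hp := List.length_pos_iff.2 hq0
    rw [length_dyckWordEquiv] at hp hlen
    refine ⟨some ⟨⟨p.semilength, Finset.mem_Icc.2 ⟨by omega, by omega⟩⟩,
      ⟨a, by dsimp only; omega⟩, p, rfl⟩, ?_⟩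
    simp only [toPath, paddedPath]
    congr 2
    omega

lemma card_eq (m : ℕ) :
    Nat.card (SchroderShape m) = 1 + ∑ h ∈ Finset.Icc 1 m, (m + 1 - h) * catalan h := by
  simp only [Nat.card_eq_fintype_card, Fintype.card_option, Fintype.card_sigma,
    Fintype.card_prod, Fintype.card_fin, DyckWord.card_dyckWord_semilength_eq_catalan]
  rw [add_comm, Finset.sum_coe_sort (Finset.Icc 1 m) (fun h => (m + 1 - h) * catalan h)]

end SchroderShape

theorem card_isUHDAvoidingSchroder (m : ℕ) :
    Nat.card {l : List (Option Bool) // IsUHDAvoidingSchroder l m} =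
      1 + ∑ h ∈ Finset.Icc 1 m, (m + 1 - h) * catalan h := by
  rw [← SchroderShape.card_eq, eq_comm]
  refine Nat.card_eq_of_bijective (fun x => ⟨x.toPath, x.isUHDAvoidingSchroder_toPath⟩)
    ⟨fun x y h => SchroderShape.toPath_injective (congrArg Subtype.val h), ?_⟩
  rintro ⟨l, hl⟩
  obtain ⟨x, rfl⟩ := SchroderShape.exists_toPath_eq hl
  exact ⟨x, rfl⟩

theorem sum_eq_count_schroder (n : ℕ) (hn : 1 ≤ n) :
    1 + ∑ h ∈ Finset.Ico 1 n, (n - h) * (Nat.choose (2 * h) h / (h + 1)) =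
      Nat.card {l : List (Option Bool) // IsUHDAvoidingSchroder l (n - 1)} := by
  obtain ⟨m, rfl⟩ := Nat.exists_eq_add_of_le' hn
  rw [Nat.add_sub_cancel, card_isUHDAvoidingSchroder, ← Finset.Ico_add_one_right_eq_Icc]
  simp only [catalan_eq_centralBinom_div, Nat.centralBinom_eq_two_mul_choose]
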